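/- arXiv:1705.02417 — 4 statements merged into one kernel-verified Lean document; each statement's English description precedes it below -/
import Mathlib

section
/- Let m ≥ 1 and r ≥ 0 be integers, N := 2^{m+r}, and let a : {0,1}^m × {0,1}^m → ℂ be a unit amplitude vector. Then the matrix M(a) − ξ'(a) ⊗ (I_N / N) is Hermitian and its trace norm is at most 2^{−r+2}. (That is: the quantum channel that attaches r ancilla qubits in state |0⟩ to an m-qubit register and applies a uniformly random permutation of the computational basis of m+r qubits maps every purified input Σ_{x,y} a_{x,y}|x⟩|y⟩ to within trace norm 2^{−r+2} of ξ'(a) ⊗ (I/2^{m+r}), the tensor product of the purification's reduced state with the maximally mixed state.) -/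
/-!
Averaging `E_{π u, π v}` over all permutations `π` of an `N`-element set gives `I / N` when
`u = v` and `(J - I) / (N (N - 1))` when `u ≠ v`, since the permutation group acts transitively
on ordered pairs of distinct points. As padding is injective, this turns `M(a)` into
`ξ'(a) ⊗ I / N + (ξ(a) - ξ'(a)) ⊗ (J - I) / (N (N - 1))`, so the difference in question is
`(ξ(a) - ξ'(a)) ⊗ (J - I) / (N (N - 1))`. Splitting `(J - I) / (N (N - 1))` into its positive
part `J / N²` and negative part `(I - J / N) / (N (N - 1))` writes the difference as `P - Q` with
`P`, `Q` positive semidefinite and `tr P + tr Q = 2 (tr ξ(a) + tr ξ'(a)) / N`, which bounds the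
trace norm. Finally `tr ξ'(a) = 1` and, by Cauchy–Schwarz, `tr ξ(a) ≤ 2^m`.
-/

open scoped BigOperators
open Kronecker Matrix

/-- Bit strings of length `m`. -/
abbrev BS (m : ℕ) := Fin m → Bool

/-- `y‖0^r` : the bit string `y` padded with `r` zeros, an element of `{0,1}^{m+r}`. -/
def pad (m r : ℕ) (y : BS m) : BS (m + r) :=
  fun i => if h : (i : ℕ) < m then y ⟨i, h⟩ else false

/-- `ξ'(a)_{x,x'} := Σ_y a_{x,y} · conj(a_{x',y})`. -/
noncomputable def xi' (m : ℕ) (a : BS m → BS m → ℂ) : Matrix (BS m) (BS m) ℂ :=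
  Matrix.of fun x x' => ∑ y : BS m, a x y * (starRingEnd ℂ) (a x' y)

/-- The matrix
`M(a) := (1/N!)·Σ_{π ∈ S({0,1}^{m+r})} Σ_{x,x',y,y'} a_{x,y}·conj(a_{x',y'})·
  (E_{x,x'} ⊗ E_{π(y‖0^r),π(y'‖0^r)})` with `N = 2^{m+r}`. -/
noncomputable def Mmat (m r : ℕ) (a : BS m → BS m → ℂ) :
    Matrix (BS m × BS (m + r)) (BS m × BS (m + r)) ℂ :=
  ((Nat.factorial (2 ^ (m + r)) : ℂ))⁻¹ •
    ∑ π : Equiv.Perm (BS (m + r)), ∑ x : BS m, ∑ x' : BS m, ∑ y : BS m, ∑ y' : BS m,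
      (a x y * (starRingEnd ℂ) (a x' y')) •
        (Matrix.single x x' (1 : ℂ) ⊗ₖ
          Matrix.single (π (pad m r y)) (π (pad m r y')) (1 : ℂ))

open scoped ComplexOrder

theorem norm_sum_sq_le_card_mul {E ι : Type*} [SeminormedAddCommGroup E] (s : Finset ι)
    (f : ι → E) : ‖∑ i ∈ s, f i‖ ^ 2 ≤ s.card * ∑ i ∈ s, ‖f i‖ ^ 2 :=
  (pow_le_pow_left₀ (norm_nonneg _) (norm_sum_le _ _) 2).trans (sq_sum_le_card_mul_sum_sq ..)

namespace Matrix

theorem IsHermitian.kronecker {m n : Type*} {A : Matrix m m ℂ} {B : Matrix n n ℂ}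
    (hA : A.IsHermitian) (hB : B.IsHermitian) : (A ⊗ₖ B).IsHermitian := by
  rw [IsHermitian, conjTranspose_kronecker, hA.eq, hB.eq]

variable {n : Type*} [Fintype n] [DecidableEq n]

/-- In the eigenbasis of `D`, `|λᵢ| = |Pᵢᵢ - Qᵢᵢ| ≤ Pᵢᵢ + Qᵢᵢ` since both entries are `≥ 0`. -/
theorem IsHermitian.sum_abs_eigenvalues_le_of_eq_sub {D P Q : Matrix n n ℂ}
    (hD : D.IsHermitian) (hP : P.PosSemidef) (hQ : Q.PosSemidef) (hDPQ : D = P - Q) :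
    ∑ i, |hD.eigenvalues i| ≤ (P.trace + Q.trace).re := by
  set V : Matrix n n ℂ := (hD.eigenvectorUnitary : Matrix n n ℂ)
  have hVV : V * star V = 1 := Unitary.mul_star_self_of_mem hD.eigenvectorUnitary.2
  have hdiag : star V * D * V = diagonal (RCLike.ofReal ∘ hD.eigenvalues) := by
    simpa [Unitary.conjStarAlgAut_star_apply] using hD.conjStarAlgAut_star_eigenvectorUnitary
  have hP' := hP.conjTranspose_mul_mul_same V
  have hQ' := hQ.conjTranspose_mul_mul_same V
  rw [← star_eq_conjTranspose] at hP' hQ'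
  have heig (i : n) :
      hD.eigenvalues i = ((star V * P * V) i i).re - ((star V * Q * V) i i).re := by
    have := congrArg (fun M => (M i i).re) hdiag
    simp only [hDPQ, Matrix.mul_sub, Matrix.sub_mul, sub_apply, Complex.sub_re] at this
    simpa using this.symm
  have htrace (R : Matrix n n ℂ) : ∑ i, ((star V * R * V) i i).re = R.trace.re := by
    rw [← Complex.re_sum]
    change (star V * R * V).trace.re = _
    rw [← R.trace_mul_cycle, Matrix.mul_assoc, hVV, Matrix.mul_one]
  calc ∑ i, |hD.eigenvalues i|
      ≤ ∑ i, (((star V * P * V) i i).re + ((star V * Q * V) i i).re) := by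
        refine Finset.sum_le_sum fun i _ => ?_
        have hPi := Complex.nonneg_iff.mp (hP'.diag_nonneg (i := i))
        have hQi := Complex.nonneg_iff.mp (hQ'.diag_nonneg (i := i))
        rw [heig, abs_le]
        constructor <;> linarith [hPi.1, hQi.1]
    _ = (P.trace + Q.trace).re := by
        rw [Finset.sum_add_distrib, htrace, htrace, Complex.add_re]

theorem IsHermitian.sum_abs_eigenvalues_kronecker_le {m : Type*} [Fintype m] [DecidableEq m]
    {A B : Matrix m m ℂ} {K L : Matrix n n ℂ} (hA : A.PosSemidef) (hB : B.PosSemidef)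
    (hK : K.PosSemidef) (hL : L.PosSemidef) (hD : ((A - B) ⊗ₖ (K - L)).IsHermitian) :
    ∑ i, |hD.eigenvalues i| ≤ ((A.trace + B.trace) * (K.trace + L.trace)).re := by
  have hsplit : (A - B) ⊗ₖ (K - L) = (A ⊗ₖ K + B ⊗ₖ L) - (A ⊗ₖ L + B ⊗ₖ K) := by
    ext ⟨i, j⟩ ⟨k, l⟩
    simp only [kronecker_apply, sub_apply, add_apply]
    ring
  refine (hD.sum_abs_eigenvalues_le_of_eq_sub ((hA.kronecker hK).add (hB.kronecker hL))
    ((hA.kronecker hL).add (hB.kronecker hK)) hsplit).trans_eq ?_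
  simp only [trace_add, trace_kronecker]
  ring_nf

end Matrix

section AllOnes

variable (α : Type*)

def allOnes : Matrix α α ℂ := of fun _ _ => 1

variable {α}

@[simp] theorem allOnes_apply (i j : α) : allOnes α i j = 1 := rfl

variable [Fintype α]

theorem allOnes_mul_allOnes : allOnes α * allOnes α = (Fintype.card α : ℂ) • allOnes α := by
  ext i j
  simp [mul_apply]

theorem trace_allOnes : (allOnes α).trace = Fintype.card α := by
  simp [trace]

theorem posSemidef_allOnes : (allOnes α).PosSemidef := by
  simpa [vecMulVec, allOnes] using posSemidef_vecMulVec_self_star (fun _ : α => (1 : ℂ))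

variable [DecidableEq α]

/-- `I - J / N` is the orthogonal projection onto the vectors with coordinate sum zero. -/
theorem posSemidef_one_sub_inv_card_smul_allOnes [Nonempty α] :
    (1 - (Fintype.card α : ℂ)⁻¹ • allOnes α).PosSemidef := by
  have hN : (Fintype.card α : ℂ) ≠ 0 := by simp
  have hJ : (allOnes α)ᴴ = allOnes α := by ext; simp
  have hproj : (1 - (Fintype.card α : ℂ)⁻¹ • allOnes α)ᴴ *
      (1 - (Fintype.card α : ℂ)⁻¹ • allOnes α) = 1 - (Fintype.card α : ℂ)⁻¹ • allOnes α := by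
    simp only [conjTranspose_sub, conjTranspose_one, conjTranspose_smul, hJ, star_inv₀,
      star_natCast, Matrix.sub_mul, Matrix.mul_sub, Matrix.one_mul, Matrix.mul_one, smul_mul_smul,
      allOnes_mul_allOnes, smul_smul]
    rw [show (Fintype.card α : ℂ)⁻¹ * (Fintype.card α : ℂ)⁻¹ * (Fintype.card α : ℂ)
      = (Fintype.card α : ℂ)⁻¹ by field_simp]
    abel
  rw [← hproj]
  exact posSemidef_conjTranspose_mul_self _

/-- The Jordan decomposition of `(J - I) / (N (N - 1))`; its trace norm is `2 / N`. -/
theorem exists_posSemidef_sub_eq_smul_allOnes_sub_one [Nontrivial α] :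
    ∃ P Q : Matrix α α ℂ, P.PosSemidef ∧ Q.PosSemidef ∧
      ((Fintype.card α : ℂ) * (Fintype.card α - 1))⁻¹ • (allOnes α - 1) = P - Q ∧
      P.trace + Q.trace = 2 / Fintype.card α := by
  have h1 : 1 ≤ Fintype.card α := Fintype.card_pos
  have hN : (Fintype.card α : ℂ) ≠ 0 := by simp
  have hN1 : (Fintype.card α : ℂ) - 1 ≠ 0 := by
    rw [sub_ne_zero, ← Nat.cast_one, Ne, Nat.cast_inj]
    exact Fintype.one_lt_card.ne'
  refine ⟨((Fintype.card α : ℂ) ^ 2)⁻¹ • allOnes α,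
    ((Fintype.card α : ℂ) * (Fintype.card α - 1))⁻¹ • (1 - (Fintype.card α : ℂ)⁻¹ • allOnes α),
    posSemidef_allOnes.smul (by positivity),
    posSemidef_one_sub_inv_card_smul_allOnes.smul
      (by rw [← Nat.cast_one, ← Nat.cast_sub h1, ← Nat.cast_mul]; positivity), ?_, ?_⟩
  · ext i j
    simp only [Matrix.smul_apply, Matrix.sub_apply, allOnes_apply, one_apply, smul_eq_mul]
    split_ifs <;> field_simp <;> ring
  · simp only [trace_smul, trace_sub, trace_one, trace_allOnes, smul_eq_mul]
    field_simp
    ring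

end AllOnes

section PermCount

open Finset Equiv

variable {α : Type*} [Fintype α] [DecidableEq α]

theorem card_perm_apply_eq_apply_eq_perm_apply (σ : Perm α) (u v s t : α) :
    #{π : Perm α | π u = σ s ∧ π v = σ t} = #{π : Perm α | π u = s ∧ π v = t} := by
  refine card_bij' (fun π _ => σ⁻¹ * π) (fun π _ => σ * π) ?_ ?_ ?_ ?_ <;>
    simp +contextual [Perm.mul_apply]

theorem sum_card_perm_apply_eq_apply_eq (u v : α) :
    ∑ s, ∑ t, #{π : Perm α | π u = s ∧ π v = t} = (Fintype.card α).factorial := by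
  rw [← Fintype.card_perm, ← card_univ, card_eq_sum_card_fiberwise (f := fun π => (π u, π v))
    (t := univ) fun _ _ => mem_univ _, ← univ_product_univ, sum_product]
  simp [Prod.ext_iff]

theorem card_mul_card_perm_apply_eq (u s : α) :
    Fintype.card α * #{π : Perm α | π u = s} = (Fintype.card α).factorial := by
  have hconst (t : α) : #{π : Perm α | π u = t ∧ π u = t} = #{π : Perm α | π u = s} := by
    simpa [swap_apply_left] using card_perm_apply_eq_apply_eq_perm_apply (swap s t) u u s s
  have hoff (t t' : α) (h : t ≠ t') : #{π : Perm α | π u = t ∧ π u = t'} = 0 := by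
    simp only [card_eq_zero, filter_eq_empty_iff]
    rintro π - ⟨rfl, rfl⟩
    exact h rfl
  rw [← sum_card_perm_apply_eq_apply_eq u u, ← smul_eq_mul, ← card_univ, ← sum_const]
  refine sum_congr rfl fun t _ => ?_
  rw [sum_eq_single t (fun t' _ h => hoff t t' (Ne.symm h)) (by simp), hconst]

theorem card_mul_pred_mul_card_perm_apply_eq_apply_eq {u v s t : α} (huv : u ≠ v)
    (hst : s ≠ t) :
    Fintype.card α * (Fintype.card α - 1) * #{π : Perm α | π u = s ∧ π v = t} =
      (Fintype.card α).factorial := by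
  have hconst (s' t' : α) (h : s' ≠ t') :
      #{π : Perm α | π u = s' ∧ π v = t'} = #{π : Perm α | π u = s ∧ π v = t} := by
    obtain ⟨σ, hσs, hσt⟩ :=
      MulAction.is_two_pretransitive_iff.mp (Perm.isMultiplyPretransitive α 2) hst h
    rw [← hσs, ← hσt]
    exact card_perm_apply_eq_apply_eq_perm_apply σ u v s t
  have hdiag (s' : α) : #{π : Perm α | π u = s' ∧ π v = s'} = 0 := by
    simp only [card_eq_zero, filter_eq_empty_iff]
    rintro π - ⟨h1, h2⟩
    exact huv (π.injective (h1.trans h2.symm))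
  have hrow (s' : α) : ∑ t', #{π : Perm α | π u = s' ∧ π v = t'} =
      (Fintype.card α - 1) * #{π : Perm α | π u = s ∧ π v = t} := by
    rw [← add_sum_erase _ _ (mem_univ s'), hdiag, zero_add,
      sum_congr rfl fun t' ht' => hconst s' t' (ne_of_mem_erase ht').symm, sum_const,
      card_erase_of_mem (mem_univ s'), card_univ, smul_eq_mul]
  rw [← sum_card_perm_apply_eq_apply_eq u v, sum_congr rfl fun s' _ => hrow s', sum_const,
    card_univ, smul_eq_mul, mul_assoc]

end PermCount

section PermAverage

open Finset Equiv

variable {α : Type*} [Fintype α] [DecidableEq α]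

noncomputable def permAvgSingle (u v : α) : Matrix α α ℂ :=
  ((Fintype.card α).factorial : ℂ)⁻¹ • ∑ π : Perm α, single (π u) (π v) 1

theorem permAvgSingle_apply (u v s t : α) :
    permAvgSingle u v s t =
      (#{π : Perm α | π u = s ∧ π v = t} : ℂ) / (Fintype.card α).factorial := by
  simp [permAvgSingle, Matrix.sum_apply, single_apply, Finset.sum_boole, div_eq_inv_mul]

theorem permAvgSingle_self (u : α) :
    permAvgSingle u u = (Fintype.card α : ℂ)⁻¹ • (1 : Matrix α α ℂ) := by
  ext s t
  rw [permAvgSingle_apply, Matrix.smul_apply, one_apply, smul_eq_mul]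
  split_ifs with hst
  · subst hst
    have hN : (Fintype.card α : ℂ) ≠ 0 :=
      Nat.cast_ne_zero.mpr (Fintype.card_pos_iff.mpr ⟨s⟩).ne'
    have hcount := congrArg (Nat.cast (R := ℂ)) (card_mul_card_perm_apply_eq u s)
    push_cast at hcount
    simp only [and_self]
    rw [div_eq_iff (by positivity), ← hcount]
    field_simp
  · have hempty : #{π : Perm α | π u = s ∧ π u = t} = 0 := by
      simp only [card_eq_zero, filter_eq_empty_iff]
      rintro π - ⟨rfl, rfl⟩
      exact hst rfl
    simp [hempty]

theorem permAvgSingle_of_ne {u v : α} (huv : u ≠ v) :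
    permAvgSingle u v =
      ((Fintype.card α : ℂ) * (Fintype.card α - 1))⁻¹ • (allOnes α - 1) := by
  ext s t
  rw [permAvgSingle_apply, Matrix.smul_apply, Matrix.sub_apply, one_apply, allOnes_apply,
    smul_eq_mul]
  split_ifs with hst
  · have hempty : #{π : Perm α | π u = s ∧ π v = t} = 0 := by
      simp only [card_eq_zero, filter_eq_empty_iff]
      rintro π - ⟨h1, h2⟩
      exact huv (π.injective (h1.trans (hst ▸ h2.symm)))
    simp [hempty]
  · have h2 : 2 ≤ Fintype.card α := Fintype.one_lt_card_iff_nontrivial.mpr ⟨u, v, huv⟩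
    have hN1 : (Fintype.card α : ℂ) - 1 ≠ 0 := by
      rw [sub_ne_zero, ← Nat.cast_one, Ne, Nat.cast_inj]
      omega
    have hcount := congrArg (Nat.cast (R := ℂ))
      (card_mul_pred_mul_card_perm_apply_eq_apply_eq huv hst)
    rw [Nat.cast_mul, Nat.cast_mul, Nat.cast_sub (by omega), Nat.cast_one] at hcount
    rw [div_eq_iff (by positivity), ← hcount, sub_zero]
    field_simp

end PermAverage

theorem pad_injective (m r : ℕ) : Function.Injective (pad m r) := by
  intro y y' h
  funext i
  simpa [pad] using congrFun h (Fin.castAdd r i)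

theorem Mmat_apply (m r : ℕ) (a : BS m → BS m → ℂ) (x x' : BS m) (s t : BS (m + r)) :
    Mmat m r a (x, s) (x', t) = ∑ y, ∑ y', a x y * (starRingEnd ℂ) (a x' y') *
      permAvgSingle (pad m r y) (pad m r y') s t := by
  have hcard : Fintype.card (BS (m + r)) = 2 ^ (m + r) := by simp
  have hπ (π : Equiv.Perm (BS (m + r))) :
      (∑ x₁, ∑ x₁', ∑ y, ∑ y', (a x₁ y * (starRingEnd ℂ) (a x₁' y')) •
        (single x₁ x₁' (1 : ℂ) ⊗ₖ single (π (pad m r y)) (π (pad m r y')) (1 : ℂ))) (x, s) (x', t)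
      = ∑ y, ∑ y', a x y * (starRingEnd ℂ) (a x' y') *
          single (π (pad m r y)) (π (pad m r y')) (1 : ℂ) s t := by
    simp only [Matrix.sum_apply, Matrix.smul_apply, kronecker_apply, smul_eq_mul]
    rw [Fintype.sum_eq_single x, Fintype.sum_eq_single x'] <;>
      intros <;> simp_all [single_apply]
  simp only [Mmat, permAvgSingle, hcard, Matrix.smul_apply, Matrix.sum_apply, smul_eq_mul, hπ,
    Finset.mul_sum]
  rw [Finset.sum_comm]
  refine Finset.sum_congr rfl fun y _ => ?_
  rw [Finset.sum_comm]
  refine Finset.sum_congr rfl fun y' _ => Finset.sum_congr rfl fun π _ => ?_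
  ring

noncomputable def xi (m : ℕ) (a : BS m → BS m → ℂ) : Matrix (BS m) (BS m) ℂ :=
  Matrix.of fun x x' => (∑ y, a x y) * (starRingEnd ℂ) (∑ y, a x' y)

theorem posSemidef_xi (m : ℕ) (a : BS m → BS m → ℂ) : (xi m a).PosSemidef := by
  simpa [vecMulVec, xi] using posSemidef_vecMulVec_self_star fun x => ∑ y, a x y

theorem posSemidef_xi' (m : ℕ) (a : BS m → BS m → ℂ) : (xi' m a).PosSemidef := by
  have h : xi' m a = Matrix.of a * (Matrix.of a)ᴴ := by
    ext x x'
    simp [xi', mul_apply]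
  rw [h]
  exact posSemidef_self_mul_conjTranspose _

theorem trace_xi (m : ℕ) (a : BS m → BS m → ℂ) :
    (xi m a).trace = ((∑ x, ‖∑ y, a x y‖ ^ 2 : ℝ) : ℂ) := by
  simp only [trace, diag_apply, xi, of_apply, Complex.mul_conj', Complex.ofReal_sum,
    Complex.ofReal_pow]

theorem trace_xi' (m : ℕ) (a : BS m → BS m → ℂ) :
    (xi' m a).trace = ((∑ x, ∑ y, ‖a x y‖ ^ 2 : ℝ) : ℂ) := by
  simp [trace, xi', Complex.mul_conj']

theorem sum_norm_sum_sq_le (m : ℕ) (a : BS m → BS m → ℂ) :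
    ∑ x, ‖∑ y, a x y‖ ^ 2 ≤ 2 ^ m * ∑ x, ∑ y, ‖a x y‖ ^ 2 := by
  rw [Finset.mul_sum]
  exact Finset.sum_le_sum fun x _ => by simpa using norm_sum_sq_le_card_mul Finset.univ (a x)

theorem Mmat_sub_eq (m r : ℕ) (a : BS m → BS m → ℂ) :
    Mmat m r a - xi' m a ⊗ₖ (((2 : ℂ) ^ (m + r))⁻¹ • (1 : Matrix (BS (m + r)) (BS (m + r)) ℂ)) =
      (xi m a - xi' m a) ⊗ₖ
        (((Fintype.card (BS (m + r)) : ℂ) * (Fintype.card (BS (m + r)) - 1))⁻¹ •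
          (allOnes (BS (m + r)) - 1)) := by
  have hcard : (Fintype.card (BS (m + r)) : ℂ) = 2 ^ (m + r) := by simp
  set K := ((Fintype.card (BS (m + r)) : ℂ) * (Fintype.card (BS (m + r)) - 1))⁻¹ •
    (allOnes (BS (m + r)) - 1)
  have hK (y y' : BS m) : permAvgSingle (pad m r y) (pad m r y') =
      K + if y = y' then ((2 : ℂ) ^ (m + r))⁻¹ • 1 - K else 0 := by
    split_ifs with h
    · rw [h, permAvgSingle_self, hcard, add_sub_cancel]
    · rw [permAvgSingle_of_ne ((pad_injective m r).ne h), add_zero]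
  ext ⟨x, s⟩ ⟨x', t⟩
  simp only [Matrix.sub_apply, Mmat_apply, hK, kronecker_apply, xi, xi', of_apply,
    Matrix.add_apply, apply_ite (fun M : Matrix _ _ ℂ => M s t), Matrix.zero_apply, mul_add,
    mul_ite, mul_zero, Finset.sum_add_distrib, Finset.sum_ite_eq, Finset.mem_univ, if_true,
    map_sum, Finset.sum_mul_sum]
  simp only [← Finset.sum_mul]
  ring

/-- The random-permutation padding channel maps every purified input to within trace norm
`2^{-r+2}` of (reduced state) ⊗ (maximally mixed state). -/
theorem statement0 (m r : ℕ) (hm : 1 ≤ m) (a : BS m → BS m → ℂ)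
    (ha : ∑ x : BS m, ∑ y : BS m, ‖a x y‖ ^ 2 = 1) :
    ∃ h : (Mmat m r a -
        xi' m a ⊗ₖ (((2 : ℂ) ^ (m + r))⁻¹ • (1 : Matrix (BS (m + r)) (BS (m + r)) ℂ))).IsHermitian,
      ∑ p : BS m × BS (m + r), |h.eigenvalues p| ≤ 4 / 2 ^ r := by
  have : Nonempty (Fin (m + r)) := ⟨⟨0, by omega⟩⟩
  obtain ⟨K, L, hK, hL, hKL, htrKL⟩ :=
    exists_posSemidef_sub_eq_smul_allOnes_sub_one (α := BS (m + r))
  rw [Mmat_sub_eq, hKL]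
  have hD := ((posSemidef_xi m a).isHermitian.sub (posSemidef_xi' m a).isHermitian).kronecker
    (hK.isHermitian.sub hL.isHermitian)
  refine ⟨hD, (hD.sum_abs_eigenvalues_kronecker_le (posSemidef_xi m a) (posSemidef_xi' m a)
    hK hL).trans ?_⟩
  have hcard : (Fintype.card (BS (m + r)) : ℂ) = ((2 ^ (m + r) : ℝ) : ℂ) := by simp
  have hξ : ∑ x, ‖∑ y, a x y‖ ^ 2 ≤ 2 ^ m := by
    simpa [ha] using sum_norm_sum_sq_le m a
  rw [htrKL, trace_xi, trace_xi', ha, hcard, ← Complex.ofReal_add, ← Complex.ofReal_ofNat 2,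
    ← Complex.ofReal_div, ← Complex.ofReal_mul, Complex.ofReal_re]
  calc (∑ x : BS m, ‖∑ y, a x y‖ ^ 2 + 1) * (2 / 2 ^ (m + r))
      ≤ (2 ^ m + 2 ^ m) * (2 / (2 ^ m * 2 ^ r)) := by
        rw [pow_add]
        gcongr
        exact one_le_pow₀ one_le_two
    _ = 4 / 2 ^ r := by
        field_simp
        ring
end

section
/- Let m ≥ 1, let H be the 2^m × 2^m complex matrix with entries H_{x,y} = 2^{−m/2}·(−1)^{x·y} for x, y ∈ {0,1}^m (the m-fold Hadamard transform), and let π be any permutation of {0,1}^m with permutation matrix P_π (so (P_π)_{u,v} = 1 if u = π(v) and 0 otherwise). Then: (i) H·P_π·H·e_{0^m} = e_{0^m}; and (ii) the 0^m-entry of the vector H·P_π·H·e_{1^m} equals 0. Consequently, for every permutation π, measuring H·P_π·H·e_{0^m} in the computational basis yields outcome 0^m with probability 1, while measuring H·P_π·H·e_{1^m} yields outcome 0^m with probability 0. -/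
open scoped BigOperators
open Matrix

/-- The `m`-fold Hadamard transform: `H_{x,y} = 2^{−m/2}·(−1)^{x·y}`. -/
noncomputable def hadamard (m : ℕ) : Matrix (BS m) (BS m) ℂ :=
  Matrix.of fun x y =>
    (((Real.sqrt (2 ^ m))⁻¹ : ℝ) : ℂ) *
      (-1 : ℂ) ^ (Finset.univ.filter fun i : Fin m => x i && y i).card

/-- The permutation matrix of a permutation `π` of `{0,1}^m`:
`(P_π)_{u,v} = 1` if `u = π(v)`, else `0`. -/
def permMat (m : ℕ) (π : Equiv.Perm (BS m)) : Matrix (BS m) (BS m) ℂ :=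
  Matrix.of fun u v => if u = π v then 1 else 0

/-- Orthogonality of characters: `∑_u (−1)^{x·u}` is `2^m` if `x = 0` else `0`. -/
lemma key_sum (m : ℕ) (x : BS m) :
    ∑ u : BS m, (-1 : ℂ) ^ (Finset.univ.filter fun i : Fin m => x i && u i).card
      = if x = (fun _ => false) then (2:ℂ)^m else 0 := by
  have h1 : ∀ u : BS m, (-1 : ℂ) ^ (Finset.univ.filter fun i : Fin m => x i && u i).card
      = ∏ i : Fin m, (if x i && u i then (-1:ℂ) else 1) := by
    intro u
    rw [Finset.prod_ite, Finset.prod_const, Finset.prod_const, one_pow, mul_one]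
  simp_rw [h1]
  rw [← Fintype.piFinset_univ,
    Finset.sum_prod_piFinset (Finset.univ : Finset Bool)
      (fun i b => if x i && b then (-1:ℂ) else 1)]
  have h2 : ∀ i : Fin m, (∑ b : Bool, if x i && b then (-1:ℂ) else 1)
      = if x i then 0 else 2 := by
    intro i; cases h : x i <;> simp [h]
  simp_rw [h2]
  by_cases hx : x = (fun _ => false)
  · simp [hx]
  · rw [if_neg hx]
    obtain ⟨i, hi⟩ : ∃ i, x i = true := by
      by_contra h; push_neg at h
      exact hx (funext fun i => by simpa using h i)
    exact Finset.prod_eq_zero (Finset.mem_univ i) (by simp [hi])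

lemma hadamard_apply (m : ℕ) (x y : BS m) :
    hadamard m x y = (((Real.sqrt (2 ^ m))⁻¹ : ℝ) : ℂ) *
      (-1 : ℂ) ^ (Finset.univ.filter fun i : Fin m => x i && y i).card := rfl

lemma permMat_apply (m : ℕ) (π : Equiv.Perm (BS m)) (u v : BS m) :
    permMat m π u v = if u = π v then 1 else 0 := rfl

/-- Entry formula for `H·P_π·H`. -/
lemma entry_eq (m : ℕ) (π : Equiv.Perm (BS m)) (x z : BS m) :
    (hadamard m * permMat m π * hadamard m) x z
      = ((((Real.sqrt (2 ^ m))⁻¹ : ℝ) : ℂ))^2 *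
        ∑ v : BS m, (-1 : ℂ) ^ (Finset.univ.filter fun i : Fin m => x i && π v i).card *
          (-1 : ℂ) ^ (Finset.univ.filter fun i : Fin m => v i && z i).card := by
  rw [Matrix.mul_apply]
  have hHP : ∀ v : BS m, (hadamard m * permMat m π) x v = hadamard m x (π v) := by
    intro v
    rw [Matrix.mul_apply, Finset.sum_eq_single (π v)]
    · rw [permMat_apply, if_pos rfl, mul_one]
    · intro u _ hu; rw [permMat_apply, if_neg hu, mul_zero]
    · intro h; exact absurd (Finset.mem_univ _) h
  simp_rw [hHP]
  rw [Finset.mul_sum]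
  refine Finset.sum_congr rfl fun v _ => ?_
  rw [hadamard_apply, hadamard_apply]
  ring

lemma coeff_sq (m : ℕ) :
    ((((Real.sqrt (2 ^ m))⁻¹ : ℝ) : ℂ))^2 * (2:ℂ)^m = 1 := by
  have h2 : ((Real.sqrt (2 ^ m) : ℝ) : ℂ)^2 = (2:ℂ)^m := by
    norm_cast
    rw [Real.sq_sqrt (by positivity)]
  have hne : ((Real.sqrt (2 ^ m) : ℝ) : ℂ) ≠ 0 := by
    norm_cast
    positivity
  push_cast
  field_simp
  rw [h2]

/-- A quasi–length-preserving (basis-permuting) encryption cannot hide the Hadamard-basis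
states: `H·P_π·H` maps `e_{0^m}` to itself, while `H·P_π·H·e_{1^m}` has zero amplitude on
`0^m`; hence a computational-basis measurement gives outcome `0^m` with probability `1`
resp. `0`. -/
theorem statement2 (m : ℕ) (hm : 1 ≤ m) (π : Equiv.Perm (BS m)) :
    (hadamard m * permMat m π * hadamard m).mulVec
        (Pi.single (fun _ => false) (1 : ℂ))
      = Pi.single (fun _ => false) (1 : ℂ)
    ∧ ((hadamard m * permMat m π * hadamard m).mulVec
        (Pi.single (fun _ => true) (1 : ℂ))) (fun _ => false) = 0
    ∧ ‖((hadamard m * permMat m π * hadamard m).mulVec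
        (Pi.single (fun _ => false) (1 : ℂ))) (fun _ => false)‖ ^ 2 = 1
    ∧ ‖((hadamard m * permMat m π * hadamard m).mulVec
        (Pi.single (fun _ => true) (1 : ℂ))) (fun _ => false)‖ ^ 2 = 0 := by
  have hmv : ∀ (z x : BS m),
      ((hadamard m * permMat m π * hadamard m).mulVec (Pi.single z (1 : ℂ))) x
        = (hadamard m * permMat m π * hadamard m) x z := by
    intro z x
    simp [Matrix.mulVec, dotProduct, Pi.single_apply]
  have h1 : (hadamard m * permMat m π * hadamard m).mulVec
      (Pi.single (fun _ => false) (1 : ℂ)) = Pi.single (fun _ => false) (1 : ℂ) := by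
    funext x
    rw [hmv, entry_eq]
    have hz : ∀ v : BS m,
        (Finset.univ.filter fun i : Fin m => v i && false).card = 0 := by
      intro v; simp
    simp_rw [hz, pow_zero, mul_one]
    rw [show (∑ v : BS m, (-1 : ℂ) ^
          (Finset.univ.filter fun i : Fin m => x i && π v i).card)
        = ∑ u : BS m, (-1 : ℂ) ^
          (Finset.univ.filter fun i : Fin m => x i && u i).card from
      Equiv.sum_comp π (fun u => (-1:ℂ) ^
        (Finset.univ.filter fun i : Fin m => x i && u i).card)]
    rw [key_sum]
    by_cases hx : x = (fun _ => false)
    · rw [if_pos hx, coeff_sq, hx, Pi.single_eq_same]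
    · rw [if_neg hx, mul_zero, Pi.single_eq_of_ne hx]
  have h2 : ((hadamard m * permMat m π * hadamard m).mulVec
      (Pi.single (fun _ => true) (1 : ℂ))) (fun _ => false) = 0 := by
    rw [hmv, entry_eq]
    have hx : ∀ v : BS m,
        (Finset.univ.filter fun i : Fin m => (false && π v i)).card = 0 := by
      intro v; simp
    simp_rw [hx, pow_zero, one_mul]
    have hcond : ∀ v : BS m,
        (Finset.univ.filter fun i : Fin m => v i && true)
          = (Finset.univ.filter fun i : Fin m => (true && v i)) := by
      intro v; simp
    simp_rw [hcond]
    rw [key_sum m (fun _ => true)]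
    have : (fun _ : Fin m => true) ≠ (fun _ => false) := by
      intro h
      have := congrFun h ⟨0, hm⟩
      simp at this
    rw [if_neg this, mul_zero]
  refine ⟨h1, h2, ?_, ?_⟩
  · rw [h1, Pi.single_eq_same]; simp
  · rw [h2]; simp
end

section
/- Let n ≥ 1 and k ∈ {0,1}^{2n}. Then P(k) is unitary and satisfies P(k)·P(k) = (−1)^{Σ_{j=1}^{n} k_{2j−1}·k_{2j}}·I_{2^n}. Consequently, for every matrix φ ∈ M_{2^n}(ℂ): P(k)·(P(k)·φ·P(k)^*)·P(k)^* = φ; that is, the decryption map of the quantum one-time pad exactly inverts its encryption map for every key, so the quantum one-time pad satisfies the correctness condition of a secret-key quantum encryption scheme with zero error. -/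
open scoped BigOperators
open Matrix

/-- The bit-flip key bit `k_{2j−1}` of the quantum one-time pad key `k ∈ {0,1}^{2n}`
(0-indexed: the bit at position `2j`). -/
def flipBit {n : ℕ} (k : Fin (2 * n) → Bool) (j : Fin n) : Bool :=
  k ⟨2 * (j : ℕ), by have := j.isLt; omega⟩

/-- The phase key bit `k_{2j}` of the quantum one-time pad key `k ∈ {0,1}^{2n}`
(0-indexed: the bit at position `2j + 1`). -/
def phaseBit {n : ℕ} (k : Fin (2 * n) → Bool) (j : Fin n) : Bool :=
  k ⟨2 * (j : ℕ) + 1, by have := j.isLt; omega⟩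

/-- The quantum one-time pad operator `P(k) = ⊗_{j=1}^{n} X^{k_{2j−1}}·Z^{k_{2j}}` on `n`
qubits, written out entrywise on the computational basis `{0,1}^n`. -/
def qotp {n : ℕ} (k : Fin (2 * n) → Bool) :
    Matrix (Fin n → Bool) (Fin n → Bool) ℂ :=
  Matrix.of fun u v =>
    if u = fun j => xor (v j) (flipBit k j) then
      (-1 : ℂ) ^ (Finset.univ.filter fun j : Fin n => phaseBit k j && v j).card
    else 0

lemma sgn_prod {n : ℕ} (q : Fin n → Bool) :
    ((-1:ℂ)) ^ (Finset.univ.filter fun j => q j).card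
      = ∏ j, if q j then (-1:ℂ) else 1 := by
  rw [← Finset.prod_const, Finset.prod_filter]

lemma qotp_apply {n : ℕ} (k : Fin (2 * n) → Bool) (u v : Fin n → Bool) :
    qotp k u v = if v = (fun j => xor (u j) (flipBit k j)) then
      (-1 : ℂ) ^ (Finset.univ.filter fun j : Fin n => phaseBit k j && v j).card
    else 0 := by
  have h : (u = fun j => xor (v j) (flipBit k j))
      ↔ (v = fun j => xor (u j) (flipBit k j)) := by
    constructor <;> (rintro rfl; funext j; simp [Bool.xor_assoc])
  simp only [qotp, Matrix.of_apply]
  exact if_congr h rfl rfl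

lemma qotp_mul_self {n : ℕ} (k : Fin (2 * n) → Bool) :
    qotp k * qotp k
      = ((-1 : ℂ) ^ (Finset.univ.filter fun j : Fin n => flipBit k j && phaseBit k j).card)
          • (1 : Matrix (Fin n → Bool) (Fin n → Bool) ℂ) := by
  ext u w
  rw [Matrix.mul_apply]
  simp only [qotp_apply, ite_mul, zero_mul]
  rw [Finset.sum_ite_eq' Finset.univ]
  simp only [Finset.mem_univ, if_true]
  have hcancel : (fun j => xor (xor (u j) (flipBit k j)) (flipBit k j)) = u := by
    funext j; simp [Bool.xor_assoc]
  rw [hcancel]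
  simp only [Matrix.smul_apply, Matrix.one_apply, smul_eq_mul, mul_ite, mul_one, mul_zero]
  by_cases h : u = w
  · subst h
    simp only [if_pos rfl]
    rw [sgn_prod, sgn_prod, sgn_prod, ← Finset.prod_mul_distrib]
    apply Finset.prod_congr rfl
    intro j _
    cases hp : phaseBit k j <;> cases hf : flipBit k j <;> cases hu : u j <;>
      simp [hp, hf, hu]
  · rw [if_neg (fun hh => h hh.symm), if_neg h]

lemma qotp_unitary {n : ℕ} (k : Fin (2 * n) → Bool) :
    qotp k ∈ Matrix.unitaryGroup (Fin n → Bool) ℂ := by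
  rw [Matrix.mem_unitaryGroup_iff]
  ext u w
  rw [Matrix.mul_apply]
  simp only [Matrix.star_apply, qotp_apply, apply_ite (star : ℂ → ℂ), star_pow, star_neg,
    star_one, star_zero, ite_mul, zero_mul]
  rw [Finset.sum_ite_eq' Finset.univ]
  simp only [Finset.mem_univ, if_true]
  have hiff : ((fun j => xor (u j) (flipBit k j)) = fun j => xor (w j) (flipBit k j)) ↔ u = w := by
    constructor
    · intro h
      have h2 : (fun j => xor ((fun i => xor (u i) (flipBit k i)) j) (flipBit k j))
          = (fun j => xor ((fun i => xor (w i) (flipBit k i)) j) (flipBit k j)) := by rw [h]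
      simpa [Bool.xor_assoc] using h2
    · rintro rfl; rfl
  rw [if_congr hiff rfl rfl]
  simp only [Matrix.one_apply, mul_ite, mul_zero]
  by_cases h : u = w
  · subst h
    simp only [if_pos rfl]
    rw [sgn_prod, ← Finset.prod_mul_distrib]
    rw [Finset.prod_eq_one]
    intro j _
    cases hp : phaseBit k j <;> cases hf : flipBit k j <;> cases hu : u j <;> simp [hp, hf, hu]
  · rw [if_neg h, if_neg h]

/-- `P(k)` is unitary, `P(k)·P(k) = (−1)^{Σ_j k_{2j−1}·k_{2j}}·I`, and hence quantum
one-time pad decryption exactly inverts encryption for every key: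
`P(k)·(P(k)·φ·P(k)^*)·P(k)^* = φ`. -/
theorem statement9 (n : ℕ) (hn : 1 ≤ n) (k : Fin (2 * n) → Bool) :
    qotp k ∈ Matrix.unitaryGroup (Fin n → Bool) ℂ
    ∧ qotp k * qotp k
        = ((-1 : ℂ) ^ (Finset.univ.filter fun j : Fin n => flipBit k j && phaseBit k j).card)
            • (1 : Matrix (Fin n → Bool) (Fin n → Bool) ℂ)
    ∧ ∀ φ : Matrix (Fin n → Bool) (Fin n → Bool) ℂ,
        qotp k * (qotp k * φ * (qotp k)ᴴ) * (qotp k)ᴴ = φ := by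
  refine ⟨qotp_unitary k, qotp_mul_self k, fun φ => ?_⟩
  set c : ℂ := (-1 : ℂ) ^ (Finset.univ.filter fun j : Fin n => flipBit k j && phaseBit k j).card with hc
  have h2 := qotp_mul_self k
  have hstar : (starRingEnd ℂ) c = c := by
    simp [hc]
  have h2' : (qotp k)ᴴ * (qotp k)ᴴ = c • 1 := by
    have := congrArg Matrix.conjTranspose h2
    rw [Matrix.conjTranspose_mul, Matrix.conjTranspose_smul, Matrix.conjTranspose_one] at this
    rw [this]
    simp only [star_pow, star_neg, star_one, hc]
  have hcc : c * c = 1 := by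
    rw [hc, ← pow_add, ← two_mul, pow_mul]
    norm_num
  calc qotp k * (qotp k * φ * (qotp k)ᴴ) * (qotp k)ᴴ
      = (qotp k * qotp k) * φ * ((qotp k)ᴴ * (qotp k)ᴴ) := by
        simp only [Matrix.mul_assoc]
    _ = (c • 1) * φ * (c • 1) := by rw [h2, h2']
    _ = (c * c) • φ := by
        simp [Matrix.smul_mul, Matrix.mul_smul, smul_smul, mul_comm]
    _ = φ := by rw [hcc, one_smul]
end

section
/- Let d ≥ 2 and let (p_1, U_1), …, (p_k, U_k) be a finite family with p_i ≥ 0, Σ_i p_i = 1, and each U_i ∈ M_d(ℂ) unitary, such that Σ_i p_i·U_i·ρ·U_i^* = (tr ρ / d)·I_d for every matrix ρ ∈ M_d(ℂ). Then the number of indices i with p_i > 0 is at least d². In particular, a mixed-unitary scheme that perfectly encrypts a single qubit (d = 2), mapping every state to the maximally mixed state, requires at least 4 unitaries, i.e., at least two classical key bits per qubit. -/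
open scoped BigOperators
open Matrix

private lemma myRank_add_le {n m : Type*} [Fintype m] [Fintype n]
    (A B : Matrix n m ℂ) : (A + B).rank ≤ A.rank + B.rank := by
  classical
  rw [Matrix.rank, Matrix.rank, Matrix.rank, Matrix.mulVecLin_add]
  refine le_trans (Submodule.finrank_mono
      (?_ : _ ≤ LinearMap.range A.mulVecLin ⊔ LinearMap.range B.mulVecLin))
    (Submodule.finrank_add_le_finrank_add_finrank _ _)
  intro x hx
  obtain ⟨y, rfl⟩ := hx
  exact Submodule.add_mem_sup (LinearMap.mem_range_self _ y) (LinearMap.mem_range_self _ y)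

private lemma myRank_sum_le {ι : Type*} {n m : Type*} [Fintype m] [Fintype n]
    (s : Finset ι) (f : ι → Matrix n m ℂ) (hf : ∀ i ∈ s, (f i).rank ≤ 1) :
    (∑ i ∈ s, f i).rank ≤ s.card := by
  classical
  induction s using Finset.induction with
  | empty => simp
  | @insert a s hx ih =>
    rw [Finset.sum_insert hx, Finset.card_insert_of_notMem hx]
    refine (myRank_add_le _ _).trans ?_
    have h1 := hf a (Finset.mem_insert_self a s)
    have h2 := ih (fun i hi => hf i (Finset.mem_insert_of_mem hi))
    omega

private lemma myRank_vecMulVec_le {n m : Type*} [Fintype m] [Fintype n]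
    (w : n → ℂ) (v : m → ℂ) : (Matrix.vecMulVec w v).rank ≤ 1 := by
  classical
  rw [Matrix.vecMulVec_eq Unit]
  refine (Matrix.rank_mul_le_left _ _).trans ?_
  simpa using Matrix.rank_le_card_width (Matrix.replicateCol Unit w)

/-- A mixed-unitary scheme that maps every `ρ ∈ M_d(ℂ)` to `(tr ρ / d)·I_d` (perfect
encryption to the maximally mixed state) must use at least `d²` unitaries with positive
probability; for a single qubit (`d = 2`) this is `4` unitaries, i.e. two classical key
bits. -/
theorem statement12 (d : ℕ) (hd : 2 ≤ d) (k : ℕ)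
    (p : Fin k → ℝ) (U : Fin k → Matrix (Fin d) (Fin d) ℂ)
    (hp : ∀ i, 0 ≤ p i) (hsum : ∑ i : Fin k, p i = 1)
    (hU : ∀ i, U i ∈ Matrix.unitaryGroup (Fin d) ℂ)
    (hmix : ∀ ρ : Matrix (Fin d) (Fin d) ℂ,
        ∑ i : Fin k, (p i : ℂ) • (U i * ρ * (U i)ᴴ)
          = (ρ.trace / (d : ℂ)) • (1 : Matrix (Fin d) (Fin d) ℂ)) :
    d ^ 2 ≤ {i : Fin k | 0 < p i}.ncard := by
  classical
  have hd0 : (d : ℂ) ≠ 0 := Nat.cast_ne_zero.mpr (by omega)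
  -- the Choi matrix entries
  set w : Fin k → (Fin d × Fin d) → ℂ := fun i x => U i x.1 x.2 with hw
  set M : Matrix (Fin d × Fin d) (Fin d × Fin d) ℂ :=
    ∑ i : Fin k, (p i : ℂ) • Matrix.vecMulVec (w i) (fun y => star (w i y)) with hM
  -- evaluate hmix on matrix units
  have hChoi : ∀ a b c e : Fin d, (∑ i : Fin k, (p i : ℂ) * (U i a b * star (U i c e)))
      = (if b = e then 1 else 0) / (d : ℂ) * (if a = c then 1 else 0) := by
    intro a b c e
    have h := hmix (Matrix.single b e 1)
    have h2 := congrArg (fun A => A a c) h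
    simp only [Matrix.sum_apply, Matrix.smul_apply, smul_eq_mul] at h2
    have hent : ∀ i : Fin k, (U i * Matrix.single b e (1:ℂ) * (U i)ᴴ) a c
        = U i a b * star (U i c e) := by
      intro i
      simp only [Matrix.mul_apply, Matrix.conjTranspose_apply, Matrix.single,
        Matrix.of_apply, ite_mul, mul_ite, mul_zero, zero_mul, mul_one, ite_and]
      simp [Finset.sum_ite_eq, Finset.sum_ite_eq', mul_comm]
    simp only [hent] at h2
    have htr : (Matrix.single b e (1:ℂ)).trace = if b = e then 1 else 0 := by
      by_cases hbe : b = e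
      · subst hbe; simp [Matrix.trace, Matrix.diag, Matrix.single]
      · rw [if_neg hbe]
        simp only [Matrix.trace, Matrix.diag, Matrix.single, Matrix.of_apply]
        refine Finset.sum_eq_zero fun x _ => ?_
        simp only [ite_eq_right_iff, and_imp]
        rintro rfl rfl
        exact absurd rfl hbe
    rw [h2, htr]
    simp [Matrix.smul_apply, Matrix.one_apply, div_eq_mul_inv, mul_comm, mul_assoc]
  -- M is (1/d) • identity
  have hMid : M = ((d : ℂ))⁻¹ • (1 : Matrix (Fin d × Fin d) (Fin d × Fin d) ℂ) := by
    ext ⟨a, b⟩ ⟨c, e⟩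
    simp only [hM, Matrix.sum_apply, Matrix.smul_apply, Matrix.vecMulVec_apply, smul_eq_mul,
      Matrix.one_apply, hw]
    rw [hChoi a b c e]
    by_cases hac : a = c <;> by_cases hbe : b = e <;>
      simp [hac, hbe, Prod.ext_iff, div_eq_mul_inv, mul_comm]
  -- rank of M is d^2
  have hrank : M.rank = d ^ 2 := by
    rw [hMid]
    have hunit : IsUnit (((d : ℂ))⁻¹ • (1 : Matrix (Fin d × Fin d) (Fin d × Fin d) ℂ)) := by
      have hmul : ((d : ℂ))⁻¹ • (1 : Matrix (Fin d × Fin d) (Fin d × Fin d) ℂ)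
          * ((d : ℂ) • (1 : Matrix (Fin d × Fin d) (Fin d × Fin d) ℂ)) = 1 := by
        rw [Matrix.smul_mul, Matrix.mul_smul, one_mul, smul_smul,
          inv_mul_cancel₀ hd0, one_smul]
      have hmul' : ((d : ℂ)) • (1 : Matrix (Fin d × Fin d) (Fin d × Fin d) ℂ)
          * ((d : ℂ)⁻¹ • (1 : Matrix (Fin d × Fin d) (Fin d × Fin d) ℂ)) = 1 := by
        rw [Matrix.smul_mul, Matrix.mul_smul, one_mul, smul_smul,
          mul_inv_cancel₀ hd0, one_smul]
      exact ⟨⟨_, _, hmul, hmul'⟩, rfl⟩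
    rw [Matrix.rank_of_isUnit _ hunit]
    simp [sq]
  -- rank of M is at most the number of positive weights
  set s : Finset (Fin k) := Finset.univ.filter (fun i => 0 < p i) with hs
  have hMsum : M = ∑ i ∈ s, (p i : ℂ) • Matrix.vecMulVec (w i) (fun y => star (w i y)) := by
    rw [hM]
    refine (Finset.sum_filter_of_ne ?_).symm
    intro i _ hne
    by_contra hpi
    apply hne
    have : p i = 0 := le_antisymm (not_lt.mp hpi) (hp i)
    simp [this]
  have hle : M.rank ≤ s.card := by
    rw [hMsum]
    refine myRank_sum_le s _ ?_
    intro i _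
    have : (p i : ℂ) • Matrix.vecMulVec (w i) (fun y => star (w i y))
        = Matrix.vecMulVec ((p i : ℂ) • w i) (fun y => star (w i y)) := by
      ext x y
      simp [Matrix.vecMulVec_apply, mul_assoc]
    rw [this]
    exact myRank_vecMulVec_le _ _
  have hcard : {i : Fin k | 0 < p i}.ncard = s.card := by
    rw [Set.ncard_eq_toFinset_card']
    congr 1
    ext i
    simp [hs]
  rw [hcard]
  omega
end
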